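/- arXiv:2210.14447 — 2 statements merged into one kernel-verified Lean document; each statement's English description precedes it below -/
import Mathlib

section
/- Theorem (two-qubit case): Let ρ be a two-qubit density matrix, γ₁ ∈ [0,1], θ ∈ (0, π/4], s = √(1-γ₁²). Define Φ(ρ) as the composition of the channels ρ ↦ ((2+s)/4)ρ + (1/4)(I⊗σ₁)ρ(I⊗σ₁) + ((1-s)/4)(I⊗σ₃)ρ(I⊗σ₃) and ρ' ↦ (1/2)ρ' + (cos²θ/2)(σ₁⊗I)ρ'(σ₁⊗I) + (sin²θ/2)(σ₃⊗I)ρ'(σ₃⊗I). Then the CHSH value I = Tr[Φ(ρ)((A₀+A₁)⊗B₀)] + Tr[Φ(ρ)((A₀−A₁)⊗B₁)] with A₀ = cosθ σ₁ + sinθ σ₃, A₁ = cosθ σ₁ − sinθ σ₃, B₀ = σ₁, B₁ = γ₁σ₃, satisfies I ≤ 2. -/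
/-!
Pass to the Heisenberg picture. Each layer of `Φ` conjugates by Pauli operators on one tensor
factor, and `σ₁ ⊗ σ₁`, `σ₃ ⊗ σ₃` are eigenvectors of the dual of each layer (a conjugation fixes
them or flips their sign). Since `A₀ + A₁ = 2 cos θ σ₁` and `A₀ - A₁ = 2 sin θ σ₃`, the CHSH value
is `cos³θ (1 + s) ⟨σ₁ ⊗ σ₁⟩ + γ₁ sin³θ ⟨σ₃ ⊗ σ₃⟩`. Both expectations lie in `[-1, 1]` because the
observables square to `1`, and by Cauchy–Schwarz, using `(1 + s)² + γ₁² = 2 (1 + s)`,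
the square of this value is at most `2 (1 + s) (cos⁶θ + sin⁶θ) ≤ 4`.
-/

open Real Matrix
open scoped Kronecker ComplexOrder

noncomputable def σ₁ : Matrix (Fin 2) (Fin 2) ℂ := !![0, 1; 1, 0]
noncomputable def σ₃ : Matrix (Fin 2) (Fin 2) ℂ := !![1, 0; 0, -1]

namespace Matrix

section Conjugation

variable {m n R : Type*} [Fintype m] [Fintype n] [CommRing R]

theorem trace_conj_mul (P M X : Matrix n n R) :
    (P * M * P * X).trace = (M * (P * X * P)).trace := by
  rw [Matrix.mul_assoc, Matrix.mul_assoc, trace_mul_comm, ← Matrix.mul_assoc,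
    ← Matrix.mul_assoc, ← Matrix.mul_assoc]

theorem trace_conj_combination_mul {P Q X : Matrix n n R} {u v : R}
    (hP : P * X * P = u • X) (hQ : Q * X * Q = v • X) (a b c : R) (M : Matrix n n R) :
    ((a • M + b • (P * M * P) + c • (Q * M * Q)) * X).trace
      = (a + b * u + c * v) * (M * X).trace := by
  simp only [Matrix.add_mul, Matrix.smul_mul, trace_add, trace_smul, trace_conj_mul, hP, hQ,
    Matrix.mul_smul, smul_eq_mul]
  ring

theorem kronecker_one_conj_of_conj_eq [DecidableEq n] {P A : Matrix m m R} {u : R}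
    (h : P * A * P = u • A) (B : Matrix n n R) :
    (P ⊗ₖ 1) * (A ⊗ₖ B) * (P ⊗ₖ 1) = u • (A ⊗ₖ B) := by
  rw [← mul_kronecker_mul, ← mul_kronecker_mul, h, Matrix.mul_one, Matrix.one_mul,
    smul_kronecker]

theorem one_kronecker_conj_of_conj_eq [DecidableEq m] {P B : Matrix n n R} {u : R}
    (h : P * B * P = u • B) (A : Matrix m m R) :
    (1 ⊗ₖ P) * (A ⊗ₖ B) * (1 ⊗ₖ P) = u • (A ⊗ₖ B) := by
  rw [← mul_kronecker_mul, ← mul_kronecker_mul, h, Matrix.mul_one, Matrix.one_mul,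
    kronecker_smul]

theorem kronecker_mul_self_eq_one [DecidableEq m] [DecidableEq n] {A : Matrix m m R}
    {B : Matrix n n R} (hA : A * A = 1) (hB : B * B = 1) : (A ⊗ₖ B) * (A ⊗ₖ B) = 1 := by
  rw [← mul_kronecker_mul, hA, hB, one_kronecker_one]

end Conjugation

theorem IsHermitian.kronecker {m n R : Type*} [CommRing R] [StarRing R] {A : Matrix m m R}
    {B : Matrix n n R} (hA : A.IsHermitian) (hB : B.IsHermitian) : (A ⊗ₖ B).IsHermitian := by
  rw [IsHermitian, conjTranspose_kronecker, hA.eq, hB.eq]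

section Expectation

variable {n 𝕜 : Type*} [Fintype n] [RCLike 𝕜]

theorem PosSemidef.trace_mul_conjTranspose_mul_self_nonneg {ρ : Matrix n n 𝕜}
    (hρ : ρ.PosSemidef) (C : Matrix n n 𝕜) : 0 ≤ (ρ * (Cᴴ * C)).trace := by
  rw [← Matrix.mul_assoc, trace_mul_cycle]
  exact (hρ.mul_mul_conjTranspose_same C).trace_nonneg

variable [DecidableEq n]

theorem PosSemidef.re_trace_mul_le_one {ρ P : Matrix n n 𝕜} (hρ : ρ.PosSemidef)
    (htr : ρ.trace = 1) (hP : P.IsHermitian) (hP2 : P * P = 1) :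
    RCLike.re (ρ * P).trace ≤ 1 := by
  have hsq : (1 - P)ᴴ * (1 - P) = (2 : 𝕜) • (1 - P) := by
    simp only [conjTranspose_sub, conjTranspose_one, hP.eq, sub_mul, mul_sub, hP2,
      Matrix.one_mul, Matrix.mul_one]
    module
  have h := hρ.trace_mul_conjTranspose_mul_self_nonneg (1 - P)
  rw [hsq, Matrix.mul_smul, trace_smul, mul_sub, Matrix.mul_one, trace_sub, htr,
    smul_eq_mul] at h
  have hre := (RCLike.nonneg_iff.mp h).1
  simp only [RCLike.mul_re, RCLike.ofNat_re, map_sub, RCLike.one_re, RCLike.ofNat_im, zero_mul,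
    sub_zero] at hre
  linarith

theorem PosSemidef.abs_re_trace_mul_le_one {ρ P : Matrix n n 𝕜} (hρ : ρ.PosSemidef)
    (htr : ρ.trace = 1) (hP : P.IsHermitian) (hP2 : P * P = 1) :
    |RCLike.re (ρ * P).trace| ≤ 1 := by
  have hneg := hρ.re_trace_mul_le_one htr hP.neg (by rw [neg_mul_neg, hP2])
  rw [Matrix.mul_neg, trace_neg, map_neg] at hneg
  exact abs_le.mpr ⟨by linarith, hρ.re_trace_mul_le_one htr hP hP2⟩

end Expectation

end Matrix

theorem isHermitian_σ₁ : σ₁.IsHermitian := by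
  ext i j; fin_cases i <;> fin_cases j <;> simp [σ₁]

theorem isHermitian_σ₃ : σ₃.IsHermitian := by
  ext i j; fin_cases i <;> fin_cases j <;> simp [σ₃]

theorem σ₁_mul_σ₁ : σ₁ * σ₁ = 1 := by
  ext i j; fin_cases i <;> fin_cases j <;> simp [σ₁, mul_apply, Fin.sum_univ_two]

theorem σ₃_mul_σ₃ : σ₃ * σ₃ = 1 := by
  ext i j; fin_cases i <;> fin_cases j <;> simp [σ₃, mul_apply, Fin.sum_univ_two]

theorem σ₁_conj_σ₁ : σ₁ * σ₁ * σ₁ = (1 : ℂ) • σ₁ := by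
  rw [σ₁_mul_σ₁, Matrix.one_mul, one_smul]

theorem σ₃_conj_σ₃ : σ₃ * σ₃ * σ₃ = (1 : ℂ) • σ₃ := by
  rw [σ₃_mul_σ₃, Matrix.one_mul, one_smul]

theorem σ₃_conj_σ₁ : σ₃ * σ₁ * σ₃ = (-1 : ℂ) • σ₁ := by
  ext i j; fin_cases i <;> fin_cases j <;> simp [σ₁, σ₃, mul_apply, Fin.sum_univ_two]

theorem σ₁_conj_σ₃ : σ₁ * σ₃ * σ₁ = (-1 : ℂ) • σ₃ := by
  ext i j; fin_cases i <;> fin_cases j <;> simp [σ₁, σ₃, mul_apply, Fin.sum_univ_two]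

theorem chsh_coefficients_bound {c t s γ x y : ℝ} (hct : c ^ 2 + t ^ 2 = 1) (hs : 0 ≤ s)
    (hsγ : s ^ 2 + γ ^ 2 = 1) (hx : |x| ≤ 1) (hy : |y| ≤ 1) :
    c ^ 3 * (1 + s) * x + γ * t ^ 3 * y ≤ 2 := by
  have weight : ∀ {p z : ℝ}, |z| ≤ 1 → p * z ≤ |p| := fun {p z} hz =>
    (le_abs_self _).trans (by rw [abs_mul]; exact mul_le_of_le_one_right (abs_nonneg p) hz)
  have hle : c ^ 3 * (1 + s) * x + γ * t ^ 3 * y ≤ |c| ^ 3 * (1 + s) + |γ| * |t| ^ 3 := by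
    have h1 := weight (p := c ^ 3 * (1 + s)) hx
    have h2 := weight (p := γ * t ^ 3) hy
    rw [abs_mul, abs_pow, abs_of_nonneg (by linarith : 0 ≤ 1 + s)] at h1
    rw [abs_mul, abs_pow] at h2
    linarith
  have hct' : |c| ^ 2 + |t| ^ 2 = 1 := by rwa [sq_abs, sq_abs]
  have hsγ' : s ^ 2 + |γ| ^ 2 = 1 := by rwa [sq_abs]
  have h6 : |c| ^ 6 + |t| ^ 6 = 1 - 3 * (|c| * |t|) ^ 2 := by
    linear_combination
      ((|c| ^ 2 + |t| ^ 2) ^ 2 + (|c| ^ 2 + |t| ^ 2) + 1 - 3 * |c| ^ 2 * |t| ^ 2) * hct'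
  have cauchy_schwarz :
      (|c| ^ 3 * (1 + s) + |γ| * |t| ^ 3) ^ 2 ≤ 2 * (1 + s) * (|c| ^ 6 + |t| ^ 6) := by
    nlinarith [sq_nonneg ((1 + s) * |t| ^ 3 - |γ| * |c| ^ 3)]
  have hs1 : s ≤ 1 := by nlinarith [sq_nonneg γ]
  nlinarith [abs_nonneg c, abs_nonneg t, abs_nonneg γ, sq_nonneg (|c| * |t|)]

theorem stmt_9_general (ρ : Matrix (Fin 2 × Fin 2) (Fin 2 × Fin 2) ℂ)
    (hρ : ρ.PosSemidef) (htr : ρ.trace = 1)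
    (γ₁ θ : ℝ) (hγ1 : 0 ≤ γ₁) (hγ2 : γ₁ ≤ 1) :
    let s : ℝ := Real.sqrt (1 - γ₁ ^ 2)
    let ρ' : Matrix (Fin 2 × Fin 2) (Fin 2 × Fin 2) ℂ :=
      (((2 + s) / 4 : ℝ) : ℂ) • ρ
        + ((1 / 4 : ℝ) : ℂ) • ((1 ⊗ₖ σ₁) * ρ * (1 ⊗ₖ σ₁))
        + (((1 - s) / 4 : ℝ) : ℂ) • ((1 ⊗ₖ σ₃) * ρ * (1 ⊗ₖ σ₃))
    let Φρ : Matrix (Fin 2 × Fin 2) (Fin 2 × Fin 2) ℂ :=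
      ((1 / 2 : ℝ) : ℂ) • ρ'
        + ((cos θ ^ 2 / 2 : ℝ) : ℂ) • ((σ₁ ⊗ₖ 1) * ρ' * (σ₁ ⊗ₖ 1))
        + ((sin θ ^ 2 / 2 : ℝ) : ℂ) • ((σ₃ ⊗ₖ 1) * ρ' * (σ₃ ⊗ₖ 1))
    let A₀ : Matrix (Fin 2) (Fin 2) ℂ := ((cos θ : ℝ) : ℂ) • σ₁ + ((sin θ : ℝ) : ℂ) • σ₃
    let A₁ : Matrix (Fin 2) (Fin 2) ℂ := ((cos θ : ℝ) : ℂ) • σ₁ - ((sin θ : ℝ) : ℂ) • σ₃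
    let B₀ : Matrix (Fin 2) (Fin 2) ℂ := σ₁
    let B₁ : Matrix (Fin 2) (Fin 2) ℂ := ((γ₁ : ℝ) : ℂ) • σ₃
    ((Φρ * ((A₀ + A₁) ⊗ₖ B₀)).trace + (Φρ * ((A₀ - A₁) ⊗ₖ B₁)).trace).re ≤ 2 := by
  intro s ρ' Φρ A₀ A₁ B₀ B₁
  have hsum : A₀ + A₁ = ((2 * cos θ : ℝ) : ℂ) • σ₁ := by simp only [A₀, A₁]; push_cast; module
  have hdiff : A₀ - A₁ = ((2 * sin θ : ℝ) : ℂ) • σ₃ := by simp only [A₀, A₁]; push_cast; module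
  have hvalue : (Φρ * ((A₀ + A₁) ⊗ₖ B₀)).trace + (Φρ * ((A₀ - A₁) ⊗ₖ B₁)).trace
      = ((cos θ ^ 3 * (1 + s) : ℝ) : ℂ) * (ρ * (σ₁ ⊗ₖ σ₁)).trace
        + ((γ₁ * sin θ ^ 3 : ℝ) : ℂ) * (ρ * (σ₃ ⊗ₖ σ₃)).trace := by
    rw [hsum, hdiff, smul_kronecker, smul_kronecker, kronecker_smul, smul_smul, Matrix.mul_smul,
      Matrix.mul_smul, trace_smul, trace_smul]
    simp only [Φρ, ρ', B₀]
    rw [trace_conj_combination_mul (kronecker_one_conj_of_conj_eq σ₁_conj_σ₁ _)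
        (kronecker_one_conj_of_conj_eq σ₃_conj_σ₁ _),
      trace_conj_combination_mul (one_kronecker_conj_of_conj_eq σ₁_conj_σ₁ _)
        (one_kronecker_conj_of_conj_eq σ₃_conj_σ₁ _),
      trace_conj_combination_mul (kronecker_one_conj_of_conj_eq σ₁_conj_σ₃ _)
        (kronecker_one_conj_of_conj_eq σ₃_conj_σ₃ _),
      trace_conj_combination_mul (one_kronecker_conj_of_conj_eq σ₁_conj_σ₃ _)
        (one_kronecker_conj_of_conj_eq σ₃_conj_σ₃ _)]
    simp only [smul_eq_mul]
    push_cast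
    linear_combination (-(Complex.cos θ * (1 + s) * (ρ * (σ₁ ⊗ₖ σ₁)).trace
      + γ₁ * Complex.sin θ * (ρ * (σ₃ ⊗ₖ σ₃)).trace) / 2) * Complex.sin_sq_add_cos_sq (θ : ℂ)
  have hs : s ^ 2 + γ₁ ^ 2 = 1 := by rw [sq_sqrt (by nlinarith)]; ring
  rw [hvalue, Complex.add_re, Complex.re_ofReal_mul, Complex.re_ofReal_mul]
  exact chsh_coefficients_bound (cos_sq_add_sin_sq θ) (sqrt_nonneg _) hs
    (hρ.abs_re_trace_mul_le_one htr (isHermitian_σ₁.kronecker isHermitian_σ₁)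
      (kronecker_mul_self_eq_one σ₁_mul_σ₁ σ₁_mul_σ₁))
    (hρ.abs_re_trace_mul_le_one htr (isHermitian_σ₃.kronecker isHermitian_σ₃)
      (kronecker_mul_self_eq_one σ₃_mul_σ₃ σ₃_mul_σ₃))

theorem stmt_9 (ρ : Matrix (Fin 2 × Fin 2) (Fin 2 × Fin 2) ℂ)
    (hρ : ρ.PosSemidef) (htr : ρ.trace = 1)
    (γ₁ θ : ℝ) (hγ1 : 0 ≤ γ₁) (hγ2 : γ₁ ≤ 1) (hθ1 : 0 < θ) (hθ2 : θ ≤ π / 4) :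
    let s : ℝ := Real.sqrt (1 - γ₁ ^ 2)
    let ρ' : Matrix (Fin 2 × Fin 2) (Fin 2 × Fin 2) ℂ :=
      (((2 + s) / 4 : ℝ) : ℂ) • ρ
        + ((1 / 4 : ℝ) : ℂ) • ((1 ⊗ₖ σ₁) * ρ * (1 ⊗ₖ σ₁))
        + (((1 - s) / 4 : ℝ) : ℂ) • ((1 ⊗ₖ σ₃) * ρ * (1 ⊗ₖ σ₃))
    let Φρ : Matrix (Fin 2 × Fin 2) (Fin 2 × Fin 2) ℂ :=
      ((1 / 2 : ℝ) : ℂ) • ρ'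
        + ((cos θ ^ 2 / 2 : ℝ) : ℂ) • ((σ₁ ⊗ₖ 1) * ρ' * (σ₁ ⊗ₖ 1))
        + ((sin θ ^ 2 / 2 : ℝ) : ℂ) • ((σ₃ ⊗ₖ 1) * ρ' * (σ₃ ⊗ₖ 1))
    let A₀ : Matrix (Fin 2) (Fin 2) ℂ := ((cos θ : ℝ) : ℂ) • σ₁ + ((sin θ : ℝ) : ℂ) • σ₃
    let A₁ : Matrix (Fin 2) (Fin 2) ℂ := ((cos θ : ℝ) : ℂ) • σ₁ - ((sin θ : ℝ) : ℂ) • σ₃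
    let B₀ : Matrix (Fin 2) (Fin 2) ℂ := σ₁
    let B₁ : Matrix (Fin 2) (Fin 2) ℂ := ((γ₁ : ℝ) : ℂ) • σ₃
    ((Φρ * ((A₀ + A₁) ⊗ₖ B₀)).trace + (Φρ * ((A₀ - A₁) ⊗ₖ B₁)).trace).re ≤ 2 :=
  stmt_9_general ρ hρ htr γ₁ θ hγ1 hγ2
end

section
/- For θ ∈ (0, π/4] and s ∈ [0,1], the expression cos³(θ)(1+s) + √(1-s²)·sin³(θ) attains values at most 2, with equality only in the limit θ → 0 with s = 1. -/
/-! Write `c = cos θ`, `i = sin θ` and `u = √(1 - s²)`, so that `s² + u² = 1`. The expression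
is `c³ + (c³ s + i³ u)`. By Cauchy–Schwarz the bracket is at most `√(c⁶ + i⁶) ≤ √(c² + i²) = 1`,
while `c³ < 1` because `θ ∈ (0, π/4]` is not a multiple of `2π`. -/

open Real

theorem cos_pow_six_add_sin_pow_six_le_one (θ : ℝ) : cos θ ^ 6 + sin θ ^ 6 ≤ 1 := by
  have h : cos θ ^ 6 + sin θ ^ 6 = 1 - 3 * (cos θ * sin θ) ^ 2 := by
    have hpyth := cos_sq_add_sin_sq θ
    linear_combination
      (cos θ ^ 4 + sin θ ^ 4 - cos θ ^ 2 * sin θ ^ 2 + cos θ ^ 2 + sin θ ^ 2 + 1) * hpyth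
  nlinarith [sq_nonneg (cos θ * sin θ)]

theorem mul_add_mul_le_one_of_sq_add_sq {a b x y : ℝ} (hab : a ^ 2 + b ^ 2 ≤ 1)
    (hxy : x ^ 2 + y ^ 2 = 1) : a * x + b * y ≤ 1 := by
  have cauchy_schwarz : (a * x + b * y) ^ 2 ≤ (a ^ 2 + b ^ 2) * (x ^ 2 + y ^ 2) := by
    nlinarith [sq_nonneg (a * y - b * x)]
  nlinarith [sq_nonneg (a * x + b * y - 1)]

theorem cos_pow_three_mul_one_add_add_sqrt_mul_sin_pow_three_lt_two {θ s : ℝ} (hθ : cos θ ≠ 1)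
    (hs : s ^ 2 ≤ 1) : cos θ ^ 3 * (1 + s) + √(1 - s ^ 2) * sin θ ^ 3 < 2 := by
  have hcos : cos θ ^ 3 < 1 := by
    simpa using Odd.strictMono_pow (R := ℝ) (by decide : Odd 3) ((cos_le_one θ).lt_of_ne hθ)
  have hcircle : s ^ 2 + √(1 - s ^ 2) ^ 2 = 1 := by
    rw [sq_sqrt (by linarith)]
    ring
  have hbracket : cos θ ^ 3 * s + sin θ ^ 3 * √(1 - s ^ 2) ≤ 1 :=
    mul_add_mul_le_one_of_sq_add_sq (by linarith [cos_pow_six_add_sin_pow_six_le_one θ]) hcircle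
  linarith

theorem stmt_16 (θ s : ℝ) (hθ1 : 0 < θ) (hθ2 : θ ≤ π / 4) (hs1 : 0 ≤ s) (hs2 : s ≤ 1) :
    cos θ ^ 3 * (1 + s) + Real.sqrt (1 - s ^ 2) * sin θ ^ 3 < 2 ∧
    Filter.Tendsto (fun t : ℝ => cos t ^ 3 * (1 + 1) + Real.sqrt (1 - 1 ^ 2) * sin t ^ 3)
      (nhdsWithin 0 (Set.Ioi 0)) (nhds 2) := by
  constructor
  · have hθ : cos θ ≠ 1 := fun h =>
      hθ1.ne' <| (cos_eq_one_iff_of_lt_of_lt (by linarith [pi_pos]) (by linarith [pi_pos])).1 h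
    exact cos_pow_three_mul_one_add_add_sqrt_mul_sin_pow_three_lt_two hθ (by nlinarith)
  · have hcont : Continuous fun t : ℝ => cos t ^ 3 * (1 + 1) + √(1 - 1 ^ 2) * sin t ^ 3 := by
      fun_prop
    convert (hcont.tendsto 0).mono_left nhdsWithin_le_nhds using 2
    norm_num
end
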